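/- arXiv:1904.11432 — 5 statements merged into one kernel-verified Lean document; each statement's English description precedes it below -/
import Mathlib

section
/- For a biased random walk on the integers that increases by 1 with probability p and decreases by 1 with probability q = 1 - p, where 0 < q < p < 1, the probability that a walk started at z ≥ 0 ever reaches -1 equals (q/p)^(z+1). -/
/-!
The function `(q/p)^(z+1)` is harmonic for the walk and is at least `1` left of `0`, so it
dominates every finite-horizon hitting probability. These increase with the horizon to a bounded
limit `L`, harmonic on `z ≥ 0` with `L (-1) = 1`. The defect `D = (q/p)^(z+1) - L` is then
harmonic on `z ≥ 0`, vanishes at `-1` and tends to `0`. Harmonicity makes its increments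
geometric, `D (z+1) - D z = (q/p)^(z+1) D 0`, so `D` moves monotonically away from `0` unless
`D 0 = 0`; hence `D ≡ 0` on `z ≥ -1`.
-/

/-- `hitProb p q t z` is the probability that the biased random walk on `ℤ`
(step `+1` with probability `p`, step `-1` with probability `q`) started at `z`
reaches `-1` within `t` steps. The probability of ever reaching `-1` is the
limit of these finite-horizon probabilities as `t → ∞`. -/
noncomputable def hitProb (p q : ℝ) : ℕ → ℤ → ℝ
  | 0, z => if z < 0 then 1 else 0
  | t + 1, z => if z < 0 then 1 else q * hitProb p q t (z - 1) + p * hitProb p q t (z + 1)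

open Filter Topology

section

variable {p q : ℝ}

theorem zpow_div_harmonic (hp : p ≠ 0) (hq : q ≠ 0) (hpq : p + q = 1) (z : ℤ) :
    q * (q / p) ^ z + p * (q / p) ^ (z + 2) = (q / p) ^ (z + 1) := by
  have hr : q / p ≠ 0 := div_ne_zero hq hp
  have hquad : q + p * (q / p) ^ 2 = q / p := by
    field_simp
    linear_combination hpq
  rw [zpow_add₀ hr, zpow_add₀ hr, zpow_one, zpow_two]
  linear_combination (q / p) ^ z * hquad

theorem eq_zero_of_harmonic_of_tendsto_zero (hp : 0 < p) (hq : 0 ≤ q) (hpq : p + q = 1)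
    {g : ℕ → ℝ} (hg : ∀ n, g (n + 1) = q * g n + p * g (n + 2)) (hg0 : g 0 = 0)
    (hlim : Tendsto g atTop (𝓝 0)) (n : ℕ) : g n = 0 := by
  have hinc : ∀ n, g (n + 1) - g n = (q / p) ^ n * g 1 := by
    intro n
    induction n with
    | zero => simp [hg0]
    | succ n ih =>
      have hstep : p * (g (n + 2) - g (n + 1)) = q * (g (n + 1) - g n) := by
        linear_combination -hg n - g (n + 1) * hpq
      rw [pow_succ, mul_right_comm, ← ih]
      field_simp
      linear_combination hstep
  have hgrow : ∀ n, g 1 ^ 2 ≤ g 1 * g (n + 1) := by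
    intro n
    induction n with
    | zero => exact (sq (g 1)).le
    | succ n ih =>
      have hstep : g 1 * g (n + 2) = g 1 * g (n + 1) + (q / p) ^ (n + 1) * g 1 ^ 2 := by
        linear_combination g 1 * hinc (n + 1)
      have : 0 ≤ (q / p) ^ (n + 1) * g 1 ^ 2 := by positivity
      linarith
  have hg1 : g 1 = 0 := by
    have hprod : Tendsto (fun n => g 1 * g (n + 1)) atTop (𝓝 0) := by
      simpa using (hlim.comp (tendsto_add_atTop_nat 1)).const_mul (g 1)
    exact pow_eq_zero_iff two_ne_zero |>.mp <|
      le_antisymm (ge_of_tendsto' hprod hgrow) (sq_nonneg _)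
  induction n with
  | zero => exact hg0
  | succ n ih => linear_combination hinc n + ih + (q / p) ^ n * hg1

theorem hitProb_of_neg (t : ℕ) {z : ℤ} (hz : z < 0) : hitProb p q t z = 1 := by
  cases t <;> simp [hitProb, hz]

theorem hitProb_succ_of_nonneg (t : ℕ) {z : ℤ} (hz : 0 ≤ z) :
    hitProb p q (t + 1) z = q * hitProb p q t (z - 1) + p * hitProb p q t (z + 1) := by
  simp [hitProb, not_lt.mpr hz]

theorem hitProb_nonneg (hp : 0 ≤ p) (hq : 0 ≤ q) (t : ℕ) (z : ℤ) : 0 ≤ hitProb p q t z := by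
  induction t generalizing z with
  | zero => unfold hitProb; split_ifs <;> norm_num
  | succ t ih =>
    unfold hitProb
    split_ifs
    · exact zero_le_one
    · exact add_nonneg (mul_nonneg hq (ih _)) (mul_nonneg hp (ih _))

theorem hitProb_le_succ (hp : 0 ≤ p) (hq : 0 ≤ q) (t : ℕ) (z : ℤ) :
    hitProb p q t z ≤ hitProb p q (t + 1) z := by
  induction t generalizing z with
  | zero =>
    unfold hitProb
    split_ifs
    · rfl
    · exact add_nonneg (mul_nonneg hq (hitProb_nonneg hp hq _ _))
        (mul_nonneg hp (hitProb_nonneg hp hq _ _))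
  | succ t ih =>
    rcases lt_or_ge z 0 with hz | hz
    · rw [hitProb_of_neg _ hz, hitProb_of_neg _ hz]
    · rw [hitProb_succ_of_nonneg _ hz, hitProb_succ_of_nonneg _ hz]
      gcongr <;> exact ih _

theorem monotone_hitProb (hp : 0 ≤ p) (hq : 0 ≤ q) (z : ℤ) :
    Monotone fun t => hitProb p q t z :=
  monotone_nat_of_le_succ fun t => hitProb_le_succ hp hq t z

theorem hitProb_le_of_superharmonic (hp : 0 ≤ p) (hq : 0 ≤ q) {f : ℤ → ℝ}
    (hf_neg : ∀ z < 0, 1 ≤ f z) (hf_nonneg : ∀ z, 0 ≤ f z)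
    (hf_super : ∀ z, 0 ≤ z → q * f (z - 1) + p * f (z + 1) ≤ f z) (t : ℕ) (z : ℤ) :
    hitProb p q t z ≤ f z := by
  induction t generalizing z with
  | zero =>
    unfold hitProb
    split_ifs with hz
    exacts [hf_neg z hz, hf_nonneg z]
  | succ t ih =>
    rcases lt_or_ge z 0 with hz | hz
    · exact (hitProb_of_neg _ hz).trans_le (hf_neg z hz)
    · rw [hitProb_succ_of_nonneg t hz]
      refine le_trans ?_ (hf_super z hz)
      gcongr <;> exact ih _

theorem hitProb_le_one (hp : 0 ≤ p) (hq : 0 ≤ q) (hpq : p + q ≤ 1) (t : ℕ) (z : ℤ) :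
    hitProb p q t z ≤ 1 :=
  hitProb_le_of_superharmonic hp hq (f := fun _ => 1) (fun _ _ => le_rfl) (fun _ => zero_le_one)
    (fun _ _ => by linarith) t z

theorem hitProb_le_zpow (hp : 0 < p) (hq : 0 < q) (hqp : q ≤ p) (hpq : p + q = 1)
    (t : ℕ) (z : ℤ) : hitProb p q t z ≤ (q / p) ^ (z + 1) := by
  have hr : 0 < q / p := div_pos hq hp
  refine hitProb_le_of_superharmonic hp.le hq.le (f := fun z => (q / p) ^ (z + 1))
    (fun z hz => ?_) (fun z => by positivity) (fun z _ => ?_) t z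
  · exact one_le_zpow_of_nonpos₀ hr ((div_le_one hp).mpr hqp) (by omega)
  · rw [sub_add_cancel, add_assoc, one_add_one_eq_two,
      zpow_div_harmonic hp.ne' hq.ne' hpq z]

noncomputable def ruinProb (p q : ℝ) (z : ℤ) : ℝ :=
  ⨆ t, hitProb p q t z

theorem tendsto_hitProb_ruinProb (hp : 0 ≤ p) (hq : 0 ≤ q) (hpq : p + q ≤ 1) (z : ℤ) :
    Tendsto (fun t => hitProb p q t z) atTop (𝓝 (ruinProb p q z)) :=
  tendsto_atTop_ciSup (monotone_hitProb hp hq z)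
    ⟨1, Set.forall_mem_range.mpr fun t => hitProb_le_one hp hq hpq t z⟩

theorem ruinProb_of_neg {z : ℤ} (hz : z < 0) : ruinProb p q z = 1 := by
  simp [ruinProb, hitProb_of_neg _ hz]

theorem ruinProb_nonneg (hp : 0 ≤ p) (hq : 0 ≤ q) (hpq : p + q ≤ 1) (z : ℤ) :
    0 ≤ ruinProb p q z :=
  ge_of_tendsto' (tendsto_hitProb_ruinProb hp hq hpq z) (hitProb_nonneg hp hq · z)

theorem ruinProb_le_zpow (hp : 0 < p) (hq : 0 < q) (hqp : q ≤ p) (hpq : p + q = 1) (z : ℤ) :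
    ruinProb p q z ≤ (q / p) ^ (z + 1) :=
  ciSup_le fun t => hitProb_le_zpow hp hq hqp hpq t z

theorem ruinProb_harmonic (hp : 0 ≤ p) (hq : 0 ≤ q) (hpq : p + q ≤ 1) {z : ℤ} (hz : 0 ≤ z) :
    ruinProb p q z = q * ruinProb p q (z - 1) + p * ruinProb p q (z + 1) := by
  have hlim := (tendsto_hitProb_ruinProb hp hq hpq z).comp (tendsto_add_atTop_nat 1)
  simp only [Function.comp_def, hitProb_succ_of_nonneg _ hz] at hlim
  exact tendsto_nhds_unique hlim <|
    ((tendsto_hitProb_ruinProb hp hq hpq _).const_mul q).add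
      ((tendsto_hitProb_ruinProb hp hq hpq _).const_mul p)

theorem ruinProb_eq_zpow (hp : 0 < p) (hq : 0 < q) (hqp : q < p) (hpq : p + q = 1) {z : ℤ}
    (hz : 0 ≤ z) : ruinProb p q z = (q / p) ^ (z + 1) := by
  set defect : ℕ → ℝ := fun n => (q / p) ^ (n : ℤ) - ruinProb p q (n - 1)
  have hzero := eq_zero_of_harmonic_of_tendsto_zero hp hq.le hpq (g := defect)
    (fun n => ?harmonic) (by simp [defect, ruinProb_of_neg]) ?tendsto
  case harmonic =>
    have hL := ruinProb_harmonic hp.le hq.le hpq.le (Int.natCast_nonneg n)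
    have hr := zpow_div_harmonic hp.ne' hq.ne' hpq n
    simp only [defect]
    push_cast
    ring_nf at hL hr ⊢
    linear_combination -hr - hL
  case tendsto =>
    refine squeeze_zero (fun n => ?_) (fun n => ?_)
      (tendsto_pow_atTop_nhds_zero_of_lt_one (div_pos hq hp).le ((div_lt_one hp).mpr hqp))
    · simpa [defect] using ruinProb_le_zpow hp hq hqp.le hpq (n - 1)
    · simpa [defect] using ruinProb_nonneg hp.le hq.le hpq.le (n - 1)
  lift z to ℕ using hz
  have h := hzero (z + 1)
  simp only [defect, Nat.cast_add, Nat.cast_one, add_sub_cancel_right] at h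
  linarith

end

theorem gambler_ruin_hitting_probability_general (p q : ℝ) (hq : 0 < q) (hqp : q < p)
    (hpq : q = 1 - p) (z : ℤ) (hz : 0 ≤ z) :
    Filter.Tendsto (fun t => hitProb p q t z) Filter.atTop (nhds ((q / p) ^ (z + 1))) := by
  have hp : 0 < p := hq.trans hqp
  have hsum : p + q = 1 := by linarith
  rw [← ruinProb_eq_zpow hp hq hqp hsum hz]
  exact tendsto_hitProb_ruinProb hp.le hq.le hsum.le z

/-- For a biased random walk that increases by 1 with probability `p` and decreases by
1 with probability `q = 1 - p`, where `0 < q < p < 1`, the probability that a walk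
started at `z ≥ 0` ever reaches `-1` equals `(q/p)^(z+1)`. -/
theorem gambler_ruin_hitting_probability (p q : ℝ) (hq : 0 < q) (hqp : q < p) (hp : p < 1)
    (hpq : q = 1 - p) (z : ℤ) (hz : 0 ≤ z) :
    Filter.Tendsto (fun t => hitProb p q t z) Filter.atTop (nhds ((q / p) ^ (z + 1))) :=
  gambler_ruin_hitting_probability_general p q hq hqp hpq z hz
end

section
/- Let 0 < q < p with p + q = 1. For every n ≥ 1, the attacker success probability P_s(n) = 1 − Σ_{m=0}^{n-1} C(m+n-1, m)(p^n q^m − p^m q^n) tends to 0 as n tends to infinity. -/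
/-!
Write `n = k + 1` and `p = 1 - q`. The negative binomial series `∑ C(m+k, k) q^m = p^(-n)`
turns `P_s(n)` into `p^n · (tail of that series from m = n) + q^n · ∑_{m<n} C(m+k, k) p^m`,
a sum of nonnegative terms. Bounding `C(a, k) ≤ 2^a` makes both pieces geometric, each at most
`(4pq)^n / (2(p - q))`, and `4pq < (p + q)^2 = 1` because `p ≠ q`.
-/

open Filter Topology Finset

noncomputable def attackerSuccessProb (p q : ℝ) (n : ℕ) : ℝ :=
  1 - ∑ m ∈ range n, ((m + n - 1).choose m : ℝ) * (p ^ n * q ^ m - p ^ m * q ^ n)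

lemma one_sub_mul_sum_range_choose_mul_geometric {𝕜 : Type*} [NormedField 𝕜]
    [HasSummableGeomSeries 𝕜] (k n : ℕ) {r : 𝕜} (hr : ‖r‖ < 1) :
    1 - (1 - r) ^ (k + 1) * ∑ m ∈ range n, ((m + k).choose k : 𝕜) * r ^ m =
      (1 - r) ^ (k + 1) * ∑' m, ((m + n + k).choose k : 𝕜) * r ^ (m + n) := by
  have hr1 : 1 - r ≠ 0 := sub_ne_zero.2 fun h => by simp [← h] at hr
  have hsum := hasSum_choose_mul_geometric_of_norm_lt_one k hr
  have hsplit := hsum.summable.sum_add_tsum_nat_add n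
  simp only [hsum.tsum_eq] at hsplit
  rw [← sub_eq_of_eq_add' hsplit.symm, mul_sub, one_div, mul_inv_cancel₀ (pow_ne_zero _ hr1)]

lemma sum_range_choose_mul_pow_le {x : ℝ} (hx : 1 < 2 * x) (n k : ℕ) :
    ∑ m ∈ range n, ((m + k).choose k : ℝ) * x ^ m ≤ 2 ^ k * (2 * x) ^ n / (2 * x - 1) := by
  have hx0 : 0 ≤ x := by linarith
  calc ∑ m ∈ range n, ((m + k).choose k : ℝ) * x ^ m
      ≤ ∑ m ∈ range n, 2 ^ k * (2 * x) ^ m := by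
        refine sum_le_sum fun m _ => ?_
        have : ((m + k).choose k : ℝ) ≤ 2 ^ (m + k) := mod_cast Nat.choose_le_two_pow _ _
        calc ((m + k).choose k : ℝ) * x ^ m ≤ 2 ^ (m + k) * x ^ m := by gcongr
          _ = 2 ^ k * (2 * x) ^ m := by ring
    _ = 2 ^ k * (((2 * x) ^ n - 1) / (2 * x - 1)) := by
        rw [← mul_sum, geom_sum_eq (by linarith)]
    _ ≤ 2 ^ k * (2 * x) ^ n / (2 * x - 1) := by
        rw [mul_div_assoc]; gcongr; linarith

lemma tsum_choose_mul_pow_add_le {x : ℝ} (hx0 : 0 ≤ x) (hx : 2 * x < 1) (n k : ℕ) :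
    ∑' m, ((m + n + k).choose k : ℝ) * x ^ (m + n) ≤ 2 ^ k * (2 * x) ^ n / (1 - 2 * x) := by
  have hterm : ∀ m, ((m + n + k).choose k : ℝ) * x ^ (m + n) ≤ 2 ^ k * (2 * x) ^ n * (2 * x) ^ m := by
    intro m
    have : ((m + n + k).choose k : ℝ) ≤ 2 ^ (m + n + k) := mod_cast Nat.choose_le_two_pow _ _
    calc ((m + n + k).choose k : ℝ) * x ^ (m + n) ≤ 2 ^ (m + n + k) * x ^ (m + n) := by gcongr
      _ = 2 ^ k * (2 * x) ^ n * (2 * x) ^ m := by ring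
  have hgeom := (summable_geometric_of_lt_one (by positivity) hx).mul_left (2 ^ k * (2 * x) ^ n)
  calc ∑' m, ((m + n + k).choose k : ℝ) * x ^ (m + n)
      ≤ ∑' m, 2 ^ k * (2 * x) ^ n * (2 * x) ^ m :=
        (hgeom.of_nonneg_of_le (fun m => by positivity) hterm).tsum_le_tsum hterm hgeom
    _ = 2 ^ k * (2 * x) ^ n / (1 - 2 * x) := by
        rw [tsum_mul_left, tsum_geometric_of_lt_one (by positivity) hx, div_eq_mul_inv]

lemma attackerSuccessProb_succ_eq {p q : ℝ} (hq : |q| < 1) (hpq : p + q = 1) (k : ℕ) :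
    attackerSuccessProb p q (k + 1) =
      p ^ (k + 1) * ∑' m, ((m + (k + 1) + k).choose k : ℝ) * q ^ (m + (k + 1)) +
        q ^ (k + 1) * ∑ m ∈ range (k + 1), ((m + k).choose k : ℝ) * p ^ m := by
  obtain rfl : p = 1 - q := by linarith
  have hchoose : ∀ m : ℕ, (m + (k + 1) - 1).choose m = (m + k).choose k := fun m =>
    Nat.choose_symm_add
  rw [← one_sub_mul_sum_range_choose_mul_geometric k (k + 1) (r := q) hq]
  have hsplit : ∑ m ∈ range (k + 1),
      ((m + k).choose k : ℝ) * ((1 - q) ^ (k + 1) * q ^ m - (1 - q) ^ m * q ^ (k + 1)) =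
        (1 - q) ^ (k + 1) * ∑ m ∈ range (k + 1), ((m + k).choose k : ℝ) * q ^ m -
          q ^ (k + 1) * ∑ m ∈ range (k + 1), ((m + k).choose k : ℝ) * (1 - q) ^ m := by
    rw [mul_sum, mul_sum, ← sum_sub_distrib]
    exact sum_congr rfl fun m _ => by ring
  simp only [attackerSuccessProb, hchoose, hsplit]
  ring

lemma attackerSuccessProb_succ_nonneg {p q : ℝ} (hq0 : 0 ≤ q) (hq1 : q < 1) (hpq : p + q = 1)
    (k : ℕ) : 0 ≤ attackerSuccessProb p q (k + 1) := by
  have hp : 0 ≤ p := by linarith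
  rw [attackerSuccessProb_succ_eq (abs_lt.2 ⟨by linarith, hq1⟩) hpq]
  have : 0 ≤ ∑' m, ((m + (k + 1) + k).choose k : ℝ) * q ^ (m + (k + 1)) :=
    tsum_nonneg fun m => by positivity
  positivity

lemma attackerSuccessProb_succ_le {p q : ℝ} (hq0 : 0 ≤ q) (hqp : q < p) (hpq : p + q = 1)
    (k : ℕ) : attackerSuccessProb p q (k + 1) ≤ (4 * p * q) ^ (k + 1) / (p - q) := by
  have hp : 0 ≤ p := by linarith
  have hgap : 1 - 2 * q = p - q ∧ 2 * p - 1 = p - q := by constructor <;> linarith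
  rw [attackerSuccessProb_succ_eq (abs_lt.2 ⟨by linarith, by linarith⟩) hpq]
  calc _ ≤ p ^ (k + 1) * (2 ^ k * (2 * q) ^ (k + 1) / (1 - 2 * q)) +
        q ^ (k + 1) * (2 ^ k * (2 * p) ^ (k + 1) / (2 * p - 1)) := by
        gcongr
        · exact tsum_choose_mul_pow_add_le hq0 (by linarith) _ _
        · exact sum_range_choose_mul_pow_le (by linarith) _ _
    _ = (4 * p * q) ^ (k + 1) / (p - q) := by
        rw [hgap.1, hgap.2, show 4 * p * q = 2 * (2 * p * q) by ring,
          mul_pow, mul_pow, mul_pow, mul_pow, mul_pow, pow_succ 2 k]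
        ring

/-- For `0 < q < p` with `p + q = 1`, the attacker success probability
`P_s(n) = 1 − Σ_{m=0}^{n-1} C(m+n-1, m)(p^n q^m − p^m q^n)` tends to `0` as `n → ∞`. -/
theorem attacker_success_prob_tendsto_zero (p q : ℝ) (hq : 0 < q) (hqp : q < p)
    (hpq : p + q = 1) :
    Filter.Tendsto
      (fun n : ℕ =>
        1 - ∑ m ∈ Finset.range n, ((m + n - 1).choose m : ℝ) * (p ^ n * q ^ m - p ^ m * q ^ n))
      Filter.atTop (nhds 0) := by
  have hp : 0 < p := hq.trans hqp
  have h4pq : 4 * p * q < 1 := by nlinarith [sq_nonneg (p - q)]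
  have hbound : Tendsto (fun k : ℕ => (4 * p * q) ^ (k + 1) / (p - q)) atTop (𝓝 0) := by
    simpa using ((tendsto_pow_atTop_nhds_zero_of_lt_one (by positivity) h4pq).comp
      (tendsto_add_atTop_nat 1)).div_const (p - q)
  refine (tendsto_add_atTop_iff_nat 1).1 ?_
  show Tendsto (fun k => attackerSuccessProb p q (k + 1)) atTop (𝓝 0)
  exact tendsto_of_tendsto_of_tendsto_of_le_of_le tendsto_const_nhds hbound
    (attackerSuccessProb_succ_nonneg hq.le (by linarith) hpq)
    (attackerSuccessProb_succ_le hq.le hqp hpq)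
end

section
/- Let 0 < q < p with p + q = 1 and n ≥ 1. The attacker success probability P_s(n) = 1 − Σ_{m=0}^{n-1} C(m+n-1, m)(p^n q^m − p^m q^n) is monotonically nonincreasing in n. -/
/-!
With `A_N(x) = ∑_{m ≤ N} C(N+m, m) x^m`, the sum in `P_s(N+1)` is `p^(N+1) A_N(q) - q^(N+1) A_N(p)`.
Pascal's rule gives `(1 - x) A_{N+1}(x) = A_N(x) + C(2N+1, N) x^(N+1) (1 - 2x)`, so when `p + q = 1`
the increment `p^(N+2) A_{N+1}(q) - p^(N+1) A_N(q)` equals `C(2N+1, N) (pq)^(N+1) (p - q)`, which is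
antisymmetric in `p, q`. Hence `P_s(N+2) - P_s(N+1) = -2 C(2N+1, N) (pq)^(N+1) (p - q) ≤ 0`.
-/

open Finset

theorem Nat.choose_two_mul_add_two (N : ℕ) :
    (2 * N + 2).choose (N + 1) = 2 * (2 * N + 1).choose N := by
  rw [Nat.choose_succ_succ, Nat.choose_symm_half, ← two_mul]

section NegBinom

variable {R : Type*} [CommRing R]

/-- Degree-`N` truncation of `(1 - x)⁻¹ ^ (N + 1) = ∑ C(N+m, m) x^m`; `p ^ (N + 1) * negBinomPartialSum N q`
is the probability that the honest miners find `N + 1` blocks before the attacker does. -/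
def negBinomPartialSum (N : ℕ) (x : R) : R :=
  ∑ m ∈ range (N + 1), ((N + m).choose m : R) * x ^ m

theorem one_sub_mul_negBinomPartialSum_succ (N : ℕ) (x : R) :
    (1 - x) * negBinomPartialSum (N + 1) x =
      negBinomPartialSum N x + ((2 * N + 1).choose N : R) * x ^ (N + 1) * (1 - 2 * x) := by
  have pascal (k : ℕ) : ((N + 1 + (k + 1)).choose (k + 1) : R) =
      ((N + (k + 1)).choose (k + 1) : R) + ((N + 1 + k).choose k : R) := by
    rw [show N + 1 + (k + 1) = N + 1 + k + 1 by omega, Nat.choose_succ_succ,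
      show N + (k + 1) = N + 1 + k by omega, Nat.cast_add, add_comm]
  have split : negBinomPartialSum (N + 1) x =
      ∑ m ∈ range (N + 2), ((N + m).choose m : R) * x ^ m +
        x * ∑ k ∈ range (N + 1), ((N + 1 + k).choose k : R) * x ^ k := by
    rw [negBinomPartialSum, sum_range_succ',
      sum_range_succ' (fun m => ((N + m).choose m : R) * x ^ m), mul_sum]
    simp only [pascal, add_mul, sum_add_distrib, Nat.choose_zero_right, add_zero]
    rw [add_right_comm]
    congr 1
    exact sum_congr rfl fun k _ => by ring
  have lower : ∑ m ∈ range (N + 2), ((N + m).choose m : R) * x ^ m =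
      negBinomPartialSum N x + ((2 * N + 1).choose N : R) * x ^ (N + 1) := by
    rw [sum_range_succ, negBinomPartialSum, show N + (N + 1) = 2 * N + 1 by omega,
      Nat.choose_symm_half]
  have upper : negBinomPartialSum (N + 1) x =
      ∑ k ∈ range (N + 1), ((N + 1 + k).choose k : R) * x ^ k +
        2 * ((2 * N + 1).choose N : R) * x ^ (N + 1) := by
    rw [negBinomPartialSum, sum_range_succ, show N + 1 + (N + 1) = 2 * N + 2 by omega,
      Nat.choose_two_mul_add_two, Nat.cast_mul, Nat.cast_ofNat]
  linear_combination split + lower - x * upper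

theorem pow_mul_negBinomPartialSum_succ_sub {p q : R} (hpq : p + q = 1) (N : ℕ) :
    p ^ (N + 2) * negBinomPartialSum (N + 1) q - p ^ (N + 1) * negBinomPartialSum N q =
      ((2 * N + 1).choose N : R) * (p * q) ^ (N + 1) * (p - q) := by
  linear_combination p ^ (N + 1) * one_sub_mul_negBinomPartialSum_succ N q +
    (p ^ (N + 1) * negBinomPartialSum (N + 1) q -
      ((2 * N + 1).choose N : R) * (p * q) ^ (N + 1)) * hpq

theorem sum_choose_mul_sub_eq_negBinomPartialSum (p q : R) (N : ℕ) :
    ∑ m ∈ range (N + 1),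
        ((m + (N + 1) - 1).choose m : R) * (p ^ (N + 1) * q ^ m - p ^ m * q ^ (N + 1)) =
      p ^ (N + 1) * negBinomPartialSum N q - q ^ (N + 1) * negBinomPartialSum N p := by
  rw [negBinomPartialSum, negBinomPartialSum, mul_sum, mul_sum, ← sum_sub_distrib]
  refine sum_congr rfl fun m _ => ?_
  rw [show m + (N + 1) - 1 = N + m by omega]
  ring

end NegBinom

/-- For `0 < q < p` with `p + q = 1`, the attacker success probability
`P_s(n) = 1 − Σ_{m=0}^{n-1} C(m+n-1, m)(p^n q^m − p^m q^n)` is monotonically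
nonincreasing in `n` for `n ≥ 1`. -/
theorem attacker_success_prob_antitone (p q : ℝ) (hq : 0 < q) (hqp : q < p) (hpq : p + q = 1)
    (n : ℕ) (hn : 1 ≤ n) :
    1 - ∑ m ∈ Finset.range (n + 1),
        ((m + (n + 1) - 1).choose m : ℝ) * (p ^ (n + 1) * q ^ m - p ^ m * q ^ (n + 1)) ≤
    1 - ∑ m ∈ Finset.range n,
        ((m + n - 1).choose m : ℝ) * (p ^ n * q ^ m - p ^ m * q ^ n) := by
  obtain ⟨N, rfl⟩ : ∃ N, n = N + 1 := ⟨n - 1, by omega⟩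
  rw [sum_choose_mul_sub_eq_negBinomPartialSum, sum_choose_mul_sub_eq_negBinomPartialSum]
  have honest := pow_mul_negBinomPartialSum_succ_sub hpq N
  have attacker := pow_mul_negBinomPartialSum_succ_sub (add_comm p q ▸ hpq) N
  rw [mul_comm q p] at attacker
  have hstep : 0 ≤ ((2 * N + 1).choose N : ℝ) * (p * q) ^ (N + 1) * (p - q) := by
    have hpq_pos : 0 < p * q := mul_pos (hq.trans hqp) hq
    exact mul_nonneg (by positivity) (sub_nonneg.2 hqp.le)
  linarith
end

section
/- Let 0 < q < p with p + q = 1 and n ≥ 1. Then P_s(n) = Σ_{m=0}^{∞} C(m+n-1, m) p^n q^m · min(1, (q/p)^{n-m}) when interpreted as Σ_{m=0}^{n-1} C(m+n-1,m) p^n q^m (q/p)^{n-m} + Σ_{m=n}^{∞} C(m+n-1,m) p^n q^m, and this equals 1 − Σ_{m=0}^{n-1} C(m+n-1,m)(p^n q^m − p^m q^n). -/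
/-! Summed over all `m`, the negative binomial weights `C(m+n-1, m) p^n q^m` add up to
`p^n / (1 - q)^n = 1`. Hence the tail `m ≥ n`, where the catch-up probability is `1`, equals one
minus the head `m < n`; on the head, `p^n q^m (q/p)^(n-m) = p^m q^n`. -/

open Finset

section NegativeBinomial

variable {𝕜 : Type*} [NormedField 𝕜]

/-- For `n = 0` the truncated subtraction makes the coefficients `Pi.single 0 1`, so the formula
still holds. -/
theorem hasSum_choose_add_sub_one_mul_geometric (n : ℕ) {q : 𝕜} (hq : ‖q‖ < 1) :
    HasSum (fun m : ℕ ↦ ((m + n - 1).choose m : 𝕜) * q ^ m) ((1 - q) ^ n)⁻¹ := by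
  cases n with
  | zero =>
    simpa using hasSum_single (f := fun m : ℕ ↦ ((m - 1).choose m : 𝕜) * q ^ m) 0
      fun m hm ↦ by simp [Nat.choose_eq_zero_of_lt (Nat.sub_lt (Nat.pos_of_ne_zero hm) one_pos)]
  | succ k =>
    convert hasSum_choose_mul_geometric_of_norm_lt_one k hq using 1
    · ext m
      rw [Nat.add_succ_sub_one, Nat.choose_symm_add]
    · rw [one_div]

theorem hasSum_negBinomial {p q : 𝕜} (hpq : p + q = 1) (hq : ‖q‖ < 1) (n : ℕ) :
    HasSum (fun m : ℕ ↦ ((m + n - 1).choose m : 𝕜) * p ^ n * q ^ m) 1 := by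
  have hp : p = 1 - q := eq_sub_of_add_eq hpq
  have hp0 : p ≠ 0 := by
    rintro rfl
    simp [show q = 1 by simpa using hpq] at hq
  have h := (hasSum_choose_add_sub_one_mul_geometric n hq).mul_left (p ^ n)
  rw [← hp, mul_inv_cancel₀ (pow_ne_zero n hp0)] at h
  simpa only [mul_comm, mul_left_comm] using h

end NegativeBinomial

theorem pow_mul_pow_mul_div_pow_sub {K : Type*} [Field K] {p : K} (hp : p ≠ 0) (q : K)
    {m n : ℕ} (hmn : m ≤ n) : p ^ n * q ^ m * (q / p) ^ (n - m) = p ^ m * q ^ n := by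
  obtain ⟨k, rfl⟩ := Nat.exists_eq_add_of_le hmn
  rw [Nat.add_sub_cancel_left, div_pow]
  field_simp
  ring

theorem attacker_success_prob_split_sum_general (p q : ℝ) (hq : 0 < q) (hqp : q < p) (hpq : p + q = 1)
    (n : ℕ) :
    (∑ m ∈ Finset.range n,
        ((m + n - 1).choose m : ℝ) * p ^ n * q ^ m * (q / p) ^ (n - m)) +
      (∑' m : ℕ, (((m + n) + n - 1).choose (m + n) : ℝ) * p ^ n * q ^ (m + n)) =
    1 - ∑ m ∈ Finset.range n,
        ((m + n - 1).choose m : ℝ) * (p ^ n * q ^ m - p ^ m * q ^ n) := by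
  have hq1 : ‖q‖ < 1 := by rw [Real.norm_of_nonneg hq.le]; linarith
  have htail := (hasSum_nat_add_iff' n).mpr (hasSum_negBinomial hpq hq1 n)
  have hhead : ∀ m ∈ range n, ((m + n - 1).choose m : ℝ) * p ^ n * q ^ m * (q / p) ^ (n - m) =
      ((m + n - 1).choose m : ℝ) * (p ^ m * q ^ n) := fun m hm ↦ by
    rw [← pow_mul_pow_mul_div_pow_sub (hq.trans hqp).ne' q (mem_range.mp hm).le]
    ring
  rw [htail.tsum_eq, sum_congr rfl hhead]
  simp only [mul_sub, sum_sub_distrib, mul_assoc]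
  ring

/-- Derivation of equation (14) from equation (13): for `0 < q < p` with `p + q = 1`
and `n ≥ 1`, the negative-binomial-weighted sum of catch-up probabilities
(`(q/p)^(n-m)` for `m < n`, and `1` for `m ≥ n`) equals the closed form
`1 − Σ_{m=0}^{n-1} C(m+n-1,m)(p^n q^m − p^m q^n)`. -/
theorem attacker_success_prob_split_sum (p q : ℝ) (hq : 0 < q) (hqp : q < p) (hpq : p + q = 1)
    (n : ℕ) (hn : 1 ≤ n) :
    (∑ m ∈ Finset.range n,
        ((m + n - 1).choose m : ℝ) * p ^ n * q ^ m * (q / p) ^ (n - m)) +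
      (∑' m : ℕ, (((m + n) + n - 1).choose (m + n) : ℝ) * p ^ n * q ^ (m + n)) =
    1 - ∑ m ∈ Finset.range n,
        ((m + n - 1).choose m : ℝ) * (p ^ n * q ^ m - p ^ m * q ^ n) :=
  attacker_success_prob_split_sum_general p q hq hqp hpq n
end

section
/- Let 0 < q < 1/2 and p = 1 − q. Then the map q ↦ P_s(n) = 1 − Σ_{m=0}^{n-1} C(m+n-1, m)((1−q)^n q^m − (1−q)^m q^n) is strictly increasing in q on (0, 1/2) for each fixed n ≥ 1. -/
/-!
Write `F(q) = Σ_{m<n} C(m+n-1, m) (1-q)^n q^m` for the probability that the honest chain finds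
`n` blocks before the attacker does; then `P_s(q) = 1 - (F(q) - F(1-q))`. Adding one term at a
time, Pascal's rule and `(m+1) C(N, m+1) = (N-m) C(N, m)` collapse the derivative of such a
negative binomial partial sum to the single term `-n C(2n-1, n-1) ((1-q) q)^(n-1)`. So `F` is strictly decreasing
on `[0, 1]`, `q ↦ F(1-q)` is strictly increasing, and `P_s` is strictly increasing.
-/

open Finset

/-- Probability that fewer than `N` failures precede the `(r+1)`-st success in Bernoulli trials
with failure probability `q`. -/
noncomputable def negBinomialCDF (r N : ℕ) (q : ℝ) : ℝ :=
  ∑ m ∈ range N, ((m + r).choose m : ℝ) * (1 - q) ^ (r + 1) * q ^ m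

theorem hasDerivAt_negBinomialCDF (r k : ℕ) (q : ℝ) :
    HasDerivAt (negBinomialCDF r (k + 1))
      (-((r + 1) * ((k + r + 1).choose k : ℝ) * (1 - q) ^ r * q ^ k)) q := by
  have hp : HasDerivAt (fun q : ℝ => (1 - q) ^ (r + 1)) (-((r + 1) * (1 - q) ^ r)) q := by
    simpa using ((hasDerivAt_id q).const_sub 1).fun_pow (r + 1)
  induction k with
  | zero =>
    have hcdf : negBinomialCDF r 1 = fun q => (1 - q) ^ (r + 1) := by
      ext x; simp [negBinomialCDF]
    simpa [hcdf] using hp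
  | succ k ih =>
    have hcdf : negBinomialCDF r (k + 2) = fun x => negBinomialCDF r (k + 1) x +
        ((k + r + 1).choose (k + 1) : ℝ) * ((1 - x) ^ (r + 1) * x ^ (k + 1)) := by
      ext x
      simp only [negBinomialCDF, sum_range_succ _ (k + 1), mul_assoc,
        show k + 1 + r = k + r + 1 by omega]
    have hmul : ((k + 1 : ℕ) : ℝ) * ((k + r + 1).choose (k + 1) : ℝ)
        = (r + 1) * ((k + r + 1).choose k : ℝ) := by
      have := Nat.choose_succ_right_eq (k + r + 1) k
      rw [show k + r + 1 - k = r + 1 by omega] at this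
      exact_mod_cast (mul_comm _ _).trans this |>.trans (mul_comm _ _)
    have hpascal : ((k + 1 + r + 1).choose (k + 1) : ℝ)
        = ((k + r + 1).choose k : ℝ) + ((k + r + 1).choose (k + 1) : ℝ) := by
      rw [show k + 1 + r + 1 = k + r + 1 + 1 by omega]
      exact_mod_cast Nat.choose_succ_succ' (k + r + 1) k
    rw [hcdf]
    refine (ih.fun_add ((hp.fun_mul (hasDerivAt_pow (k + 1) q)).const_mul _)).congr_deriv ?_
    rw [hpascal]
    push_cast at hmul ⊢
    linear_combination ((1 - q) ^ (r + 1) * q ^ k) * hmul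

theorem strictAntiOn_negBinomialCDF (r k : ℕ) :
    StrictAntiOn (negBinomialCDF r (k + 1)) (Set.Icc 0 1) := by
  have hcont : Continuous (negBinomialCDF r (k + 1)) :=
    continuous_iff_continuousAt.2 fun q => (hasDerivAt_negBinomialCDF r k q).continuousAt
  refine strictAntiOn_of_deriv_neg (convex_Icc 0 1) hcont.continuousOn fun q hq => ?_
  rw [interior_Icc] at hq
  have hC : (0 : ℝ) < (k + r + 1).choose k := by exact_mod_cast Nat.choose_pos (by omega)
  rw [(hasDerivAt_negBinomialCDF r k q).deriv, neg_lt_zero]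
  exact mul_pos (mul_pos (mul_pos (by positivity) hC) (pow_pos (sub_pos.2 hq.2) r)) (pow_pos hq.1 k)

/-- For each fixed `n ≥ 1`, the attacker success probability
`q ↦ 1 − Σ_{m=0}^{n-1} C(m+n-1, m)((1−q)^n q^m − (1−q)^m q^n)`
is strictly increasing in the attacker power `q` on `(0, 1/2)`. -/
theorem attacker_success_prob_strictMonoOn (n : ℕ) (hn : 1 ≤ n) :
    StrictMonoOn
      (fun q : ℝ =>
        1 - ∑ m ∈ Finset.range n,
          ((m + n - 1).choose m : ℝ) * ((1 - q) ^ n * q ^ m - (1 - q) ^ m * q ^ n))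
      (Set.Ioo (0 : ℝ) (1 / 2)) := by
  obtain ⟨r, rfl⟩ : ∃ r, n = r + 1 := ⟨n - 1, by omega⟩
  have hsum (q : ℝ) : ∑ m ∈ range (r + 1),
      ((m + (r + 1) - 1).choose m : ℝ) * ((1 - q) ^ (r + 1) * q ^ m - (1 - q) ^ m * q ^ (r + 1))
      = negBinomialCDF r (r + 1) q - negBinomialCDF r (r + 1) (1 - q) := by
    simp only [negBinomialCDF, sub_sub_cancel, ← sum_sub_distrib, Nat.add_sub_cancel, ← add_assoc]
    exact sum_congr rfl fun m _ => by ring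
  have hF := strictAntiOn_negBinomialCDF r r
  intro a ⟨ha0, ha1⟩ b ⟨hb0, hb1⟩ hab
  simp only [hsum]
  have h₁ := hF ⟨ha0.le, by linarith⟩ ⟨hb0.le, by linarith⟩ hab
  have h₂ := hF ⟨by linarith, by linarith⟩ ⟨by linarith, by linarith⟩ (sub_lt_sub_left hab 1)
  linarith
end
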